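/- Modulo the image of d_L: L* → Λ²L* (which is spanned by T̄* ∧ ρ*, i.e., ω̄ ∧ W), every constant-coefficient solution of the generalized Maurer–Cartan equation is equivalent to a unique element of the form ε̃ = t₃₂ ω̄∧ρ̄ - t₁₁ ω̄∧T - t₂₂ ρ̄∧W + t₁₄ T∧W with (t₃₂, t₁₁, t₂₂, t₁₄) ∈ ℂ⁴; i.e., the quotient of the Maurer–Cartan solution space by im(d_L) is 4-dimensional. -/
import Mathlib


open Complex

/-! Representatives modulo `im(d_L)` of the constant-coefficient Maurer–Cartan solutions.
The solution space is `span{T̄*∧W̄*, T̄*∧ω*, T̄*∧ρ*, W̄*∧ρ*, ω*∧ρ*} ⊂ Λ²L*` (those with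
`t₁₂ = 0`), and `im(d_L) = span{T̄*∧ρ*}` (i.e. `span{ω̄∧W}`).  Under the identifications
`T̄* ≡ 2ω̄`, `W̄* ≡ 2ρ̄`, `ω* ≡ 2T`, `ρ* ≡ 2W`, bivectors live in
`Λ²((g ⊕ g*) ⊗ ℂ)`. -/

abbrev V8 := (Fin 4 → ℂ) × (Fin 4 → ℂ)

noncomputable def ι8 : V8 →ₗ[ℂ] ExteriorAlgebra ℂ V8 := ExteriorAlgebra.ι ℂ

noncomputable def Te : V8 := (Pi.single 0 1, 0)      -- T
noncomputable def We : V8 := (Pi.single 1 1, 0)      -- W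
noncomputable def ombe : V8 := (0, Pi.single 2 1)    -- ω̄
noncomputable def rhbe : V8 := (0, Pi.single 3 1)    -- ρ̄
noncomputable def Tbst : V8 := (2 : ℂ) • ombe        -- T̄*
noncomputable def Wbst : V8 := (2 : ℂ) • rhbe        -- W̄*
noncomputable def omst : V8 := (2 : ℂ) • Te          -- ω*
noncomputable def rhst : V8 := (2 : ℂ) • We          -- ρ*

/-- The (5-dimensional) space of constant-coefficient Maurer–Cartan solutions. -/
noncomputable def MCsol : Submodule ℂ (ExteriorAlgebra ℂ V8) :=
  Submodule.span ℂ
    {ι8 Tbst * ι8 Wbst, ι8 Tbst * ι8 omst, ι8 Tbst * ι8 rhst,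
     ι8 Wbst * ι8 rhst, ι8 omst * ι8 rhst}

/-- The image of `d_L`, spanned by `T̄*∧ρ* = 4 ω̄∧W`. -/
noncomputable def imdL : Submodule ℂ (ExteriorAlgebra ℂ V8) :=
  Submodule.span ℂ {ι8 ombe * ι8 We}

set_option linter.unreachableTactic false
set_option linter.unusedTactic false

/-- The wedge of two linear functionals, as an alternating 2-form. -/
noncomputable def wedgeForm (a b : V8 →ₗ[ℂ] ℂ) : V8 [⋀^Fin 2]→ₗ[ℂ] ℂ where
  toFun v := a (v 0) * b (v 1) - a (v 1) * b (v 0)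
  map_update_add' := by
    intro _ v i x y
    fin_cases i <;>
      simp [Function.update_self, Function.update_of_ne, Fin.ext_iff] <;> ring
  map_update_smul' := by
    intro _ v i c x
    fin_cases i <;>
      simp [Function.update_self, Function.update_of_ne, Fin.ext_iff] <;> ring
  map_eq_zero_of_eq' := by
    intro v i j hv hij
    fin_cases i <;> fin_cases j <;> simp_all <;> ring

/-- Extension of `wedgeForm` to a linear functional on the exterior algebra. -/
noncomputable def Dmap (a b : V8 →ₗ[ℂ] ℂ) : ExteriorAlgebra ℂ V8 →ₗ[ℂ] ℂ :=
  ExteriorAlgebra.liftAlternating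
    (fun i => match i with
      | 2 => wedgeForm a b
      | _ => 0)

theorem Dmap_mul (a b : V8 →ₗ[ℂ] ℂ) (u v : V8) :
    Dmap a b (ι8 u * ι8 v) = a u * b v - a v * b u := by
  show Dmap a b (ExteriorAlgebra.ι ℂ u * ExteriorAlgebra.ι ℂ v) = _
  rw [Dmap, ExteriorAlgebra.liftAlternating_ι_mul, ExteriorAlgebra.liftAlternating_ι]
  rfl

noncomputable def pc (k : Fin 4) : V8 →ₗ[ℂ] ℂ := (LinearMap.proj k).comp (LinearMap.fst ℂ _ _)
noncomputable def qc (k : Fin 4) : V8 →ₗ[ℂ] ℂ := (LinearMap.proj k).comp (LinearMap.snd ℂ _ _)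

/-- The representative with coefficients `t`. -/
noncomputable def Xr (t : Fin 4 → ℂ) : ExteriorAlgebra ℂ V8 :=
  t 0 • (ι8 ombe * ι8 rhbe) - t 1 • (ι8 ombe * ι8 Te)
    - t 2 • (ι8 rhbe * ι8 We) + t 3 • (ι8 Te * ι8 We)

theorem Xr_inj (t : Fin 4 → ℂ) (h : Xr t ∈ imdL) : t = 0 := by
  rw [imdL, Submodule.mem_span_singleton] at h
  obtain ⟨c, hc⟩ := h
  funext i
  fin_cases i
  · have := congrArg (Dmap (qc 2) (qc 3)) hc
    simp [Xr, Dmap_mul, pc, qc, Te, We, ombe, rhbe, Pi.single_apply] at this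
    first
    | simpa using this
    | simpa using this.symm
  · have := congrArg (Dmap (qc 2) (pc 0)) hc
    simp [Xr, Dmap_mul, pc, qc, Te, We, ombe, rhbe, Pi.single_apply] at this
    first
    | simpa using this
    | simpa using this.symm
  · have := congrArg (Dmap (qc 3) (pc 1)) hc
    simp [Xr, Dmap_mul, pc, qc, Te, We, ombe, rhbe, Pi.single_apply] at this
    first
    | simpa using this
    | simpa using this.symm
  · have := congrArg (Dmap (pc 0) (pc 1)) hc
    simp [Xr, Dmap_mul, pc, qc, Te, We, ombe, rhbe, Pi.single_apply] at this
    first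
    | simpa using this
    | simpa using this.symm

theorem Xr_add (s t : Fin 4 → ℂ) : Xr (s + t) = Xr s + Xr t := by
  simp only [Xr, Pi.add_apply, add_smul]; abel

theorem Xr_smul (c : ℂ) (t : Fin 4 → ℂ) : Xr (c • t) = c • Xr t := by
  simp only [Xr, Pi.smul_apply, smul_eq_mul, mul_smul, smul_sub, smul_add]

theorem Xr_sub (s t : Fin 4 → ℂ) : Xr (s - t) = Xr s - Xr t := by
  have := Xr_add (s - t) t
  simp only [sub_add_cancel] at this
  rw [this]; abel

theorem mul4 (u w : V8) : ι8 ((2:ℂ) • u) * ι8 ((2:ℂ) • w) = (4:ℂ) • (ι8 u * ι8 w) := by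
  rw [map_smul, map_smul, smul_mul_smul_comm]
  norm_num

theorem exists_rep : ∀ v ∈ MCsol, ∃ t : Fin 4 → ℂ, v - Xr t ∈ imdL := by
  intro v hv
  induction hv using Submodule.span_induction with
  | mem x hx =>
    simp only [Set.mem_insert_iff, Set.mem_singleton_iff] at hx
    rcases hx with h | h | h | h | h <;> subst h
    · exact ⟨![4,0,0,0], by
        rw [Tbst, Wbst, mul4, Xr]; simp⟩
    · exact ⟨![0,-4,0,0], by
        rw [Tbst, omst, mul4, Xr]; simp⟩
    · exact ⟨0, by
        rw [Tbst, rhst, mul4, Xr]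
        simp only [Pi.zero_apply, zero_smul, sub_zero, add_zero]
        exact Submodule.smul_mem _ _ (Submodule.subset_span rfl)⟩
    · exact ⟨![0,0,-4,0], by
        rw [Wbst, rhst, mul4, Xr]; simp⟩
    · exact ⟨![0,0,0,4], by
        rw [omst, rhst, mul4, Xr]; simp⟩
  | zero => exact ⟨0, by simp [Xr]⟩
  | add x y hx hy ihx ihy =>
    obtain ⟨s, hs⟩ := ihx
    obtain ⟨t, ht⟩ := ihy
    refine ⟨s + t, ?_⟩
    rw [Xr_add]
    have := Submodule.add_mem imdL hs ht
    convert this using 1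
    abel
  | smul c x hx ihx =>
    obtain ⟨t, ht⟩ := ihx
    refine ⟨c • t, ?_⟩
    rw [Xr_smul, ← smul_sub]
    exact Submodule.smul_mem _ _ ht

/-- Every constant-coefficient Maurer–Cartan solution is, modulo `im(d_L)`, equivalent to
a unique element `t₃₂ ω̄∧ρ̄ - t₁₁ ω̄∧T - t₂₂ ρ̄∧W + t₁₄ T∧W` with
`(t₃₂, t₁₁, t₂₂, t₁₄) ∈ ℂ⁴`: the quotient of the solution space by `im(d_L)` is
4-dimensional with these representatives. -/
theorem unique_representative_mod_imdL :
    ∀ v ∈ MCsol, ∃! t : Fin 4 → ℂ,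
      v - (t 0 • (ι8 ombe * ι8 rhbe) - t 1 • (ι8 ombe * ι8 Te)
            - t 2 • (ι8 rhbe * ι8 We) + t 3 • (ι8 Te * ι8 We)) ∈ imdL := by
  intro v hv
  obtain ⟨t, ht⟩ := exists_rep v hv
  refine ⟨t, ht, ?_⟩
  intro t' ht'
  have hmem : Xr (t' - t) ∈ imdL := by
    rw [Xr_sub]
    have := Submodule.sub_mem imdL (show v - Xr t ∈ imdL from ht)
      (show v - Xr t' ∈ imdL from ht')
    convert this using 1
    abel
  have := Xr_inj _ hmem
  exact sub_eq_zero.mp this
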